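/- arXiv:0810.4866 — 6 statements merged into one kernel-verified Lean document; each statement's English description precedes it below -/
import Mathlib

section
/- Let (A, μ, α, 1_A) and (A', μ', α', 1_{A'}) be unital multiplicative Hom-associative algebras over a field k of characteristic 0. Then the tensor product A ⊗ A', equipped with the multiplication determined by (a ⊗ a')·(b ⊗ b') = μ(a,b) ⊗ μ'(a',b'), the linear map α ⊗ α', and the unit 1_A ⊗ 1_{A'}, is again a unital multiplicative Hom-associative algebra: it satisfies Hom-associativity, multiplicativity of α ⊗ α', and the two-sided unit laws. -/
open scoped TensorProduct

/-- The tensor product of two unital multiplicative Hom-associative algebras,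
with multiplication determined by `(a ⊗ a')·(b ⊗ b') = μ(a,b) ⊗ μ'(a',b')`, twisting map
`α ⊗ α'`, and unit `1_A ⊗ 1_{A'}`, is again a unital multiplicative Hom-associative
algebra. -/
theorem tensor_product_hom_associative_algebra
    (k : Type*) [Field k] [CharZero k]
    (A : Type*) [AddCommGroup A] [Module k A]
    (A' : Type*) [AddCommGroup A'] [Module k A']
    (μ : A →ₗ[k] A →ₗ[k] A) (α : A →ₗ[k] A) (oneA : A)
    (μ' : A' →ₗ[k] A' →ₗ[k] A') (α' : A' →ₗ[k] A') (oneA' : A')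
    (hassoc : ∀ x y z : A, μ (μ x y) (α z) = μ (α x) (μ y z))
    (hmult : ∀ x y : A, α (μ x y) = μ (α x) (α y))
    (hunit : ∀ x : A, μ oneA x = x ∧ μ x oneA = x)
    (hassoc' : ∀ x y z : A', μ' (μ' x y) (α' z) = μ' (α' x) (μ' y z))
    (hmult' : ∀ x y : A', α' (μ' x y) = μ' (α' x) (α' y))
    (hunit' : ∀ x : A', μ' oneA' x = x ∧ μ' x oneA' = x) :
    ∀ m : (A ⊗[k] A') →ₗ[k] (A ⊗[k] A') →ₗ[k] (A ⊗[k] A'),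
      (∀ (a b : A) (a' b' : A'),
          m (a ⊗ₜ[k] a') (b ⊗ₜ[k] b') = μ a b ⊗ₜ[k] μ' a' b') →
      (∀ u v w : A ⊗[k] A',
          m (m u v) (TensorProduct.map α α' w) =
            m (TensorProduct.map α α' u) (m v w)) ∧
      (∀ u v : A ⊗[k] A',
          TensorProduct.map α α' (m u v) =
            m (TensorProduct.map α α' u) (TensorProduct.map α α' v)) ∧
      (∀ u : A ⊗[k] A', m (oneA ⊗ₜ[k] oneA') u = u ∧ m u (oneA ⊗ₜ[k] oneA') = u) := by
  intro m hm
  refine ⟨?_, ?_, ?_⟩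
  · intro u v w
    induction u using TensorProduct.induction_on with
    | zero => simp
    | add x y hx hy => simp [map_add, LinearMap.add_apply, hx, hy]
    | tmul a a' =>
      induction v using TensorProduct.induction_on with
      | zero => simp
      | add x y hx hy => simp [map_add, LinearMap.add_apply, hx, hy]
      | tmul b b' =>
        induction w using TensorProduct.induction_on with
        | zero => simp
        | add x y hx hy => simp [map_add, hx, hy]
        | tmul c c' =>
          simp [hm, TensorProduct.map_tmul, hassoc, hassoc']
  · intro u v
    induction u using TensorProduct.induction_on with
    | zero => simp
    | add x y hx hy => simp [map_add, LinearMap.add_apply, hx, hy]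
    | tmul a a' =>
      induction v using TensorProduct.induction_on with
      | zero => simp
      | add x y hx hy => simp [map_add, hx, hy]
      | tmul b b' =>
        simp [hm, TensorProduct.map_tmul, hmult, hmult']
  · intro u
    induction u using TensorProduct.induction_on with
    | zero => simp
    | add x y hx hy =>
      exact ⟨by simp [map_add, hx.1, hy.1], by simp [map_add, LinearMap.add_apply, hx.2, hy.2]⟩
    | tmul a a' =>
      exact ⟨by simp [hm, (hunit a).1, (hunit' a').1], by simp [hm, (hunit a).2, (hunit' a').2]⟩
end

section
/- Let B be a unital associative algebra over a field k of characteristic 0 and let α : B → B be a unital algebra endomorphism. Define the twisted multiplication μ_α(x,y) = α(x·y). Then (B, μ_α, α) is a unital multiplicative Hom-associative algebra: for all x, y, z ∈ B one has μ_α(μ_α(x,y), α(z)) = μ_α(α(x), μ_α(y,z)) (Hom-associativity) and α(μ_α(x,y)) = μ_α(α(x), α(y)) (multiplicativity). -/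
/-- If `B` is a unital associative algebra over a field `k` of characteristic 0
and `α : B → B` is a unital algebra endomorphism, then the twisted multiplication
`μ_α(x,y) = α(x·y)` together with `α` makes `B` a (unital) multiplicative Hom-associative
algebra: Hom-associativity and multiplicativity hold. -/
theorem twisted_algebra_hom_associative
    (k : Type*) [Field k] [CharZero k]
    (B : Type*) [Ring B] [Algebra k B]
    (α : B →ₐ[k] B) :
    (∀ x y z : B, α (α (x * y) * α z) = α (α x * α (y * z))) ∧
    (∀ x y : B, α (α (x * y)) = α (α x * α y)) := by
  constructor
  · intro x y z
    simp [map_mul, mul_assoc]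
  · intro x y
    simp [map_mul]
end

section
/- Let C be a coassociative counital coalgebra over a field k of characteristic 0 with comultiplication Δ : C → C ⊗ C, and let α : C → C be a coalgebra morphism. Define Δ_α = Δ ∘ α. Then Δ_α is Hom-coassociative: (Δ_α ⊗ α) ∘ Δ_α = (α ⊗ Δ_α) ∘ Δ_α as linear maps C → C ⊗ C ⊗ C; moreover Δ_α ∘ α = (α ⊗ α) ∘ Δ_α (comultiplicativity of α with respect to Δ_α). -/
open scoped TensorProduct

/-- If `C` is a coassociative counital coalgebra over a field `k` of
characteristic 0 and `α : C → C` is a coalgebra morphism, then `Δ_α = Δ ∘ α` is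
Hom-coassociative: `(Δ_α ⊗ α) ∘ Δ_α = (α ⊗ Δ_α) ∘ Δ_α` (as maps into `C ⊗ (C ⊗ C)`,
via the associator), and moreover `Δ_α ∘ α = (α ⊗ α) ∘ Δ_α`. -/
theorem twisted_comul_hom_coassociative
    (k : Type*) [Field k] [CharZero k]
    (C : Type*) [AddCommGroup C] [Module k C] [Coalgebra k C]
    (α : C →ₗ[k] C)
    (hΔ : Coalgebra.comul (R := k) ∘ₗ α =
        TensorProduct.map α α ∘ₗ Coalgebra.comul (R := k))
    (hε : Coalgebra.counit (R := k) ∘ₗ α = Coalgebra.counit (R := k)) :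
    ((TensorProduct.assoc k C C C).toLinearMap ∘ₗ
        TensorProduct.map (Coalgebra.comul (R := k) ∘ₗ α) α ∘ₗ
          (Coalgebra.comul (R := k) ∘ₗ α) =
      TensorProduct.map α (Coalgebra.comul (R := k) ∘ₗ α) ∘ₗ
        (Coalgebra.comul (R := k) ∘ₗ α)) ∧
    ((Coalgebra.comul (R := k) ∘ₗ α) ∘ₗ α =
      TensorProduct.map α α ∘ₗ (Coalgebra.comul (R := k) ∘ₗ α)) := by
  have h1 : TensorProduct.map (Coalgebra.comul (R := k) ∘ₗ α) α =
      (Coalgebra.comul (R := k)).rTensor C ∘ₗ TensorProduct.map α α := by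
    rw [LinearMap.rTensor, ← TensorProduct.map_comp, LinearMap.id_comp]
  have h2 : TensorProduct.map α (Coalgebra.comul (R := k) ∘ₗ α) =
      (Coalgebra.comul (R := k)).lTensor C ∘ₗ TensorProduct.map α α := by
    rw [LinearMap.lTensor, ← TensorProduct.map_comp, LinearMap.id_comp]
  have hm : TensorProduct.map α α ∘ₗ (Coalgebra.comul (R := k) ∘ₗ α) =
      (Coalgebra.comul (R := k) ∘ₗ α) ∘ₗ α := by
    rw [← LinearMap.comp_assoc, ← hΔ]
  refine ⟨?_, hm.symm⟩
  rw [h1, h2, LinearMap.comp_assoc _ (TensorProduct.map α α)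
      ((Coalgebra.comul (R := k)).rTensor C), hm,
    LinearMap.comp_assoc _ (TensorProduct.map α α)
      ((Coalgebra.comul (R := k)).lTensor C), hm]
  have := Coalgebra.coassoc (R := k) (A := C)
  simp only [← LinearMap.comp_assoc] at this ⊢
  rw [this]
end

section
/- Let k be a field of characteristic 0, and let H and A be k-modules with linear maps Δ_H : H → H ⊗ H, ρ : A → H ⊗ A, α_H : H → H, and α_A : A → A. Assume the comodule axiom (Δ_H ⊗ id_A) ∘ ρ = (id_H ⊗ ρ) ∘ ρ and the compatibility ρ ∘ α_A = (α_H ⊗ α_A) ∘ ρ. Define ρ_α = ρ ∘ α_A and Δ_α = Δ_H ∘ α_H. Then (α_H ⊗ ρ_α) ∘ ρ_α = (Δ_α ⊗ α_A) ∘ ρ_α as linear maps A → H ⊗ H ⊗ A. That is, ρ_α gives (A, α_A) the structure of a comodule over the twisted coalgebra (H, Δ_α, α_H). -/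
open scoped TensorProduct

/-- Given `Δ_H : H → H ⊗ H`, `ρ : A → H ⊗ A`, `α_H : H → H`, `α_A : A → A`
with the comodule axiom `(Δ_H ⊗ id) ∘ ρ = (id ⊗ ρ) ∘ ρ` (via the associator) and the
compatibility `ρ ∘ α_A = (α_H ⊗ α_A) ∘ ρ`, the maps `ρ_α = ρ ∘ α_A` and
`Δ_α = Δ_H ∘ α_H` satisfy `(α_H ⊗ ρ_α) ∘ ρ_α = (Δ_α ⊗ α_A) ∘ ρ_α`; i.e. `ρ_α` makes
`(A, α_A)` a comodule over the twisted coalgebra `(H, Δ_α, α_H)`. -/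
theorem twisted_comodule_structure
    (k : Type*) [Field k] [CharZero k]
    (H : Type*) [AddCommGroup H] [Module k H]
    (A : Type*) [AddCommGroup A] [Module k A]
    (ΔH : H →ₗ[k] H ⊗[k] H) (ρ : A →ₗ[k] H ⊗[k] A)
    (αH : H →ₗ[k] H) (αA : A →ₗ[k] A)
    (hcomod : (TensorProduct.assoc k H H A).toLinearMap ∘ₗ
        TensorProduct.map ΔH LinearMap.id ∘ₗ ρ =
      TensorProduct.map LinearMap.id ρ ∘ₗ ρ)
    (hcompat : ρ ∘ₗ αA = TensorProduct.map αH αA ∘ₗ ρ) :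
    TensorProduct.map αH (ρ ∘ₗ αA) ∘ₗ (ρ ∘ₗ αA) =
      (TensorProduct.assoc k H H A).toLinearMap ∘ₗ
        TensorProduct.map (ΔH ∘ₗ αH) αA ∘ₗ (ρ ∘ₗ αA) := by
  have h1 : ρ ∘ₗ (αA ∘ₗ αA) = TensorProduct.map (αH ∘ₗ αH) (αA ∘ₗ αA) ∘ₗ ρ := by
    rw [← LinearMap.comp_assoc, hcompat, LinearMap.comp_assoc, hcompat,
      ← LinearMap.comp_assoc, ← TensorProduct.map_comp]
  calc TensorProduct.map αH (ρ ∘ₗ αA) ∘ₗ (ρ ∘ₗ αA)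
      = TensorProduct.map αH (ρ ∘ₗ αA) ∘ₗ (TensorProduct.map αH αA ∘ₗ ρ) := by
        rw [hcompat]
    _ = TensorProduct.map (αH ∘ₗ αH) ((ρ ∘ₗ αA) ∘ₗ αA) ∘ₗ ρ := by
        rw [← LinearMap.comp_assoc, ← TensorProduct.map_comp]
    _ = TensorProduct.map LinearMap.id ρ ∘ₗ
          TensorProduct.map (αH ∘ₗ αH) (αA ∘ₗ αA) ∘ₗ ρ := by
        rw [← LinearMap.comp_assoc, ← TensorProduct.map_comp, LinearMap.id_comp,
          LinearMap.comp_assoc]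
    _ = TensorProduct.map LinearMap.id ρ ∘ₗ ρ ∘ₗ (αA ∘ₗ αA) := by rw [← h1]
    _ = ((TensorProduct.assoc k H H A).toLinearMap ∘ₗ
          TensorProduct.map ΔH LinearMap.id ∘ₗ ρ) ∘ₗ (αA ∘ₗ αA) := by
        rw [hcomod, LinearMap.comp_assoc]
    _ = (TensorProduct.assoc k H H A).toLinearMap ∘ₗ
          TensorProduct.map ΔH LinearMap.id ∘ₗ
          TensorProduct.map (αH ∘ₗ αH) (αA ∘ₗ αA) ∘ₗ ρ := by
        rw [LinearMap.comp_assoc, LinearMap.comp_assoc, h1]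
    _ = (TensorProduct.assoc k H H A).toLinearMap ∘ₗ
          TensorProduct.map (ΔH ∘ₗ αH) αA ∘ₗ (ρ ∘ₗ αA) := by
        rw [hcompat]
        simp only [← LinearMap.comp_assoc, ← TensorProduct.map_comp, LinearMap.id_comp,
          LinearMap.comp_id]
end

section
/- Let k be a field of characteristic 0, and let H and A be associative unital k-algebras. Let ρ : A → H ⊗ A be an algebra morphism (where H ⊗ A carries the tensor product multiplication (h ⊗ a)(h' ⊗ a') = hh' ⊗ aa'), let α_H : H → H be a linear map and α_A : A → A an algebra morphism, and assume ρ ∘ α_A = (α_H ⊗ α_A) ∘ ρ. Define ρ_α = ρ ∘ α_A and the twisted multiplication μ_{α,A}(x,y) = α_A(x·y) on A. Then for all x, y ∈ A, ρ_α(μ_{α,A}(x,y)) = (α_H ⊗ α_A)(ρ_α(x) · ρ_α(y)), where the product on the right is the tensor product multiplication of H ⊗ A. That is, ρ_α is a morphism of Hom-associative algebras from (A, μ_{α,A}) to H ⊗ A with multiplication twisted by α_H ⊗ α_A. -/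
open scoped TensorProduct

/-- Let `H`, `A` be associative unital `k`-algebras, `ρ : A → H ⊗ A` an
algebra morphism, `α_H : H → H` linear, `α_A : A → A` an algebra morphism, with
`ρ ∘ α_A = (α_H ⊗ α_A) ∘ ρ`.  Then `ρ_α = ρ ∘ α_A` satisfies
`ρ_α(μ_{α,A}(x,y)) = (α_H ⊗ α_A)(ρ_α(x) · ρ_α(y))` for all `x, y ∈ A`, where
`μ_{α,A}(x,y) = α_A(x·y)` and `·` on the right is the tensor product multiplication of
`H ⊗ A`. -/
theorem twisted_comodule_algebra_multiplicativity
    (k : Type*) [Field k] [CharZero k]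
    (H : Type*) [Ring H] [Algebra k H]
    (A : Type*) [Ring A] [Algebra k A]
    (ρ : A →ₐ[k] H ⊗[k] A)
    (αH : H →ₗ[k] H) (αA : A →ₐ[k] A)
    (hcompat : ρ.toLinearMap ∘ₗ αA.toLinearMap =
        TensorProduct.map αH αA.toLinearMap ∘ₗ ρ.toLinearMap) :
    ∀ x y : A,
      ρ (αA (αA (x * y))) =
        TensorProduct.map αH αA.toLinearMap (ρ (αA x) * ρ (αA y)) := by
  intro x y
  have h := LinearMap.congr_fun hcompat (αA (x * y))
  simp only [LinearMap.coe_comp, Function.comp_apply, AlgHom.toLinearMap_apply] at h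
  rw [h, map_mul, map_mul]
end

section
/- Let B be a bialgebra over a field k of characteristic 0 and let α : B → B be a bialgebra morphism. Define μ_α(x,y) = α(x·y) and Δ_α = Δ ∘ α. Then (B, μ_α, Δ_α, α) is a Hom-bialgebra; that is, all of the following hold: (i) μ_α(μ_α(x,y), α(z)) = μ_α(α(x), μ_α(y,z)) and α(μ_α(x,y)) = μ_α(α(x), α(y)) for all x,y,z ∈ B; (ii) (Δ_α ⊗ α) ∘ Δ_α = (α ⊗ Δ_α) ∘ Δ_α; (iii) Δ_α(μ_α(x,y)) = (α ⊗ α)(Δ_α(x) · Δ_α(y)) for all x,y ∈ B, where · on the right is the usual multiplication of the tensor product algebra B ⊗ B. Moreover, if α = id_B then (B, μ_α, Δ_α, α) recovers the original bialgebra B. -/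
open scoped TensorProduct

open TensorProduct LinearMap in
/-- Let `B` be a bialgebra over a field `k` of characteristic 0 and
`α : B → B` a bialgebra morphism.  With `μ_α(x,y) = α(x·y)` and `Δ_α = Δ ∘ α`, the
quadruple `(B, μ_α, Δ_α, α)` is a Hom-bialgebra:
(i) `μ_α` is Hom-associative and `α` is multiplicative for it;
(ii) `Δ_α` is Hom-coassociative;
(iii) `Δ_α` is a morphism of Hom-associative algebras,
`Δ_α(μ_α(x,y)) = (α ⊗ α)(Δ_α(x) · Δ_α(y))`.
Moreover, if `α = id` then `μ_α` and `Δ_α` recover the original multiplication and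
comultiplication of `B`. -/
theorem bialgebra_deforms_to_hom_bialgebra
    (k : Type*) [Field k] [CharZero k]
    (B : Type*) [Ring B] [Bialgebra k B]
    (α : B →ₐ[k] B)
    (hΔ : Coalgebra.comul (R := k) ∘ₗ α.toLinearMap =
        TensorProduct.map α.toLinearMap α.toLinearMap ∘ₗ Coalgebra.comul (R := k))
    (hε : Coalgebra.counit (R := k) ∘ₗ α.toLinearMap = Coalgebra.counit (R := k)) :
    -- (i) Hom-associativity and multiplicativity of μ_α
    (∀ x y z : B, α (α (x * y) * α z) = α (α x * α (y * z))) ∧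
    (∀ x y : B, α (α (x * y)) = α (α x * α y)) ∧
    -- (ii) Hom-coassociativity of Δ_α
    ((TensorProduct.assoc k B B B).toLinearMap ∘ₗ
        TensorProduct.map (Coalgebra.comul (R := k) ∘ₗ α.toLinearMap) α.toLinearMap ∘ₗ
          (Coalgebra.comul (R := k) ∘ₗ α.toLinearMap) =
      TensorProduct.map α.toLinearMap (Coalgebra.comul (R := k) ∘ₗ α.toLinearMap) ∘ₗ
        (Coalgebra.comul (R := k) ∘ₗ α.toLinearMap)) ∧
    -- (iii) Δ_α is a morphism of Hom-associative algebras
    (∀ x y : B,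
        Coalgebra.comul (R := k) (α (α (x * y))) =
          TensorProduct.map α.toLinearMap α.toLinearMap
            (Coalgebra.comul (R := k) (α x) * Coalgebra.comul (R := k) (α y))) ∧
    -- if α = id, the original bialgebra is recovered
    (α = AlgHom.id k B →
      (∀ x y : B, α (x * y) = x * y) ∧
        Coalgebra.comul (R := k) ∘ₗ α.toLinearMap = Coalgebra.comul (R := k)) := by
  refine ⟨?_, ?_, ?_, ?_, ?_⟩
  · intro x y z; rw [← map_mul, ← map_mul, mul_assoc]
  · intro x y; rw [map_mul]
  · set A := α.toLinearMap with hA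
    set C := Coalgebra.comul (R := k) (A := B) with hC
    have h2 : C ∘ₗ (A ∘ₗ A) = map (A ∘ₗ A) (A ∘ₗ A) ∘ₗ C := by
      rw [← comp_assoc, hΔ, comp_assoc, hΔ, ← comp_assoc, ← map_comp]
    calc (TensorProduct.assoc k B B B).toLinearMap ∘ₗ map (C ∘ₗ A) A ∘ₗ (C ∘ₗ A)
        = (TensorProduct.assoc k B B B).toLinearMap ∘ₗ
            (map (C ∘ₗ A) A ∘ₗ map A A) ∘ₗ C := by
          rw [hΔ]; simp only [comp_assoc]
      _ = (TensorProduct.assoc k B B B).toLinearMap ∘ₗ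
            map (C ∘ₗ (A ∘ₗ A)) (A ∘ₗ A) ∘ₗ C := by
          rw [← map_comp, comp_assoc]
      _ = (TensorProduct.assoc k B B B).toLinearMap ∘ₗ
            map (map (A ∘ₗ A) (A ∘ₗ A) ∘ₗ C) ((A ∘ₗ A) ∘ₗ LinearMap.id) ∘ₗ C := by
          rw [h2, comp_id]
      _ = ((TensorProduct.assoc k B B B).toLinearMap ∘ₗ
            map (map (A ∘ₗ A) (A ∘ₗ A)) (A ∘ₗ A)) ∘ₗ map C LinearMap.id ∘ₗ C := by
          rw [map_comp]; simp only [comp_assoc]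
      _ = (map (A ∘ₗ A) (map (A ∘ₗ A) (A ∘ₗ A)) ∘ₗ
            (TensorProduct.assoc k B B B).toLinearMap) ∘ₗ map C LinearMap.id ∘ₗ C := by
          rw [map_map_comp_assoc_eq]
      _ = map (A ∘ₗ A) (map (A ∘ₗ A) (A ∘ₗ A)) ∘ₗ
            ((TensorProduct.assoc k B B B).toLinearMap ∘ₗ C.rTensor B ∘ₗ C) := by
          rw [rTensor]; simp only [comp_assoc]
      _ = map (A ∘ₗ A) (map (A ∘ₗ A) (A ∘ₗ A)) ∘ₗ (C.lTensor B ∘ₗ C) := by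
          rw [Coalgebra.coassoc]
      _ = map (A ∘ₗ A) (map (A ∘ₗ A) (A ∘ₗ A)) ∘ₗ map LinearMap.id C ∘ₗ C := by
          rw [lTensor]
      _ = (map (A ∘ₗ A) (map (A ∘ₗ A) (A ∘ₗ A)) ∘ₗ map LinearMap.id C) ∘ₗ C := by
          simp only [comp_assoc]
      _ = map ((A ∘ₗ A) ∘ₗ LinearMap.id) (map (A ∘ₗ A) (A ∘ₗ A) ∘ₗ C) ∘ₗ C := by
          rw [← map_comp]
      _ = map (A ∘ₗ A) (C ∘ₗ (A ∘ₗ A)) ∘ₗ C := by rw [comp_id, h2]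
      _ = (map A (C ∘ₗ A) ∘ₗ map A A) ∘ₗ C := by
          rw [← map_comp, comp_assoc]
      _ = map A (C ∘ₗ A) ∘ₗ (C ∘ₗ A) := by rw [hΔ]; simp only [comp_assoc]
  · intro x y
    have hΔ' : ∀ b : B, Coalgebra.comul (R := k) (α b) =
        TensorProduct.map α.toLinearMap α.toLinearMap (Coalgebra.comul (R := k) b) :=
      fun b => LinearMap.congr_fun hΔ b
    rw [← Bialgebra.comul_mul, ← map_mul, ← hΔ' (α (x * y)), map_mul]
  · intro h
    constructor
    · intro x y; rw [h]; rfl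
    · rw [h]; rfl
end
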